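/- arXiv:2303.03296 — 2 statements merged into one kernel-verified Lean document; each statement's English description precedes it below -/
import Mathlib

section
/- Let G be a cactus and F ⊆ E(G). Then the graph G' obtained from G by doubling all edges of F is 3-edge-connected if and only if the spanning subgraph (V(G), F) is connected. -/
open scoped Classical

/-- Number of undirected edges with exactly one endpoint in `X`. -/
noncomputable def edgesCross {V : Type*} (E : Multiset (V × V)) (X : Finset V) : ℕ :=
  (E.filter fun e => (e.1 ∈ X ∧ e.2 ∉ X) ∨ (e.2 ∈ X ∧ e.1 ∉ X)).card

/-- Local edge-connectivity between `u` and `v` in the multigraph `E`: the minimum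
size of a cut separating `u` from `v` (by Menger, the maximum number of pairwise
edge-disjoint `u`-`v` paths). -/
noncomputable def lam {V : Type*} (E : Multiset (V × V)) (u v : V) : ℕ :=
  sInf {n | ∃ X : Finset V, u ∈ X ∧ v ∉ X ∧ edgesCross E X = n}

/-- A multigraph is `m`-edge-connected. -/
def EdgeConn {V : Type*} [Fintype V] (m : ℕ) (E : Multiset (V × V)) : Prop :=
  ∀ X : Finset V, X.Nonempty → X ≠ Finset.univ → m ≤ edgesCross E X

/-- A multigraph (on a nonempty finite vertex set) is connected iff every nonempty
proper vertex subset has an edge crossing it. -/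
def MConnected {V : Type*} [Fintype V] (E : Multiset (V × V)) : Prop :=
  ∀ X : Finset V, X.Nonempty → X ≠ Finset.univ → 1 ≤ edgesCross E X

/-!
Contracting the edges of `F` in a cactus leaves a cactus, so if `(V, F)` is disconnected, some
2-cut of `G` avoids `F`, and that cut has only two edges in `G + F`.

In terms of cuts: if an `F`-free cut `X` separates `u` from `v`, so does an `F`-free 2-cut. This
goes by induction on `F`. Say the new edge `f = pq` crosses the 2-cut `Z` obtained for the smaller
`F`, with `u, p ∈ Z` and `p, q ∉ X` (otherwise pass to complements). Intersect `Z` with a 2-cut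
`T` obtained for the smaller `F` that separates `u` from `p`. Submodularity makes `Z ∩ T` a 2-cut:
either `Z ∪ T` is proper, or `q ∈ T \ Z` and `f` itself runs between `Z \ T` and `T \ Z`.
-/

open Finset

section

variable {V : Type*}

theorem edgesCross_add (E F : Multiset (V × V)) (X : Finset V) :
    edgesCross (E + F) X = edgesCross E X + edgesCross F X := by
  simp [edgesCross, Multiset.filter_add]

theorem edgesCross_singleton (e : V × V) (X : Finset V) :
    edgesCross {e} X = if (e.1 ∈ X ↔ e.2 ∈ X) then 0 else 1 := by
  unfold edgesCross
  rw [Multiset.filter_singleton]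
  by_cases h1 : e.1 ∈ X <;> by_cases h2 : e.2 ∈ X <;> simp [h1, h2]

theorem edgesCross_cons_eq_zero_iff (e : V × V) (E : Multiset (V × V)) (X : Finset V) :
    edgesCross (e ::ₘ E) X = 0 ↔ (e.1 ∈ X ↔ e.2 ∈ X) ∧ edgesCross E X = 0 := by
  rw [← Multiset.singleton_add, edgesCross_add, Nat.add_eq_zero_iff, edgesCross_singleton]
  split_ifs with h <;> simp [h]

theorem edgesCross_compl [Fintype V] (E : Multiset (V × V)) (X : Finset V) :
    edgesCross E Xᶜ = edgesCross E X := by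
  unfold edgesCross
  congr 1
  exact Multiset.filter_congr fun e _ => by simp only [mem_compl]; tauto

theorem edgesCross_inter_add_edgesCross_union_le (E : Multiset (V × V)) (S T : Finset V) :
    edgesCross E (S ∩ T) + edgesCross E (S ∪ T) ≤ edgesCross E S + edgesCross E T := by
  induction E using Multiset.induction_on with
  | empty => simp [edgesCross]
  | cons e E ih =>
    simp only [← Multiset.singleton_add, edgesCross_add, edgesCross_singleton]
    by_cases h1S : e.1 ∈ S <;> by_cases h2S : e.2 ∈ S <;>
      by_cases h1T : e.1 ∈ T <;> by_cases h2T : e.2 ∈ T <;>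
      simp [h1S, h2S, h1T, h2T] <;> omega

theorem edgesCross_inter_add_edgesCross_union_add_two_le {E : Multiset (V × V)} {S T : Finset V}
    {e : V × V} (he : e ∈ E) (hS : ¬(e.1 ∈ S ↔ e.2 ∈ S)) (hT : ¬(e.1 ∈ T ↔ e.2 ∈ T))
    (hI : e.1 ∈ S ∩ T ↔ e.2 ∈ S ∩ T) (hU : e.1 ∈ S ∪ T ↔ e.2 ∈ S ∪ T) :
    edgesCross E (S ∩ T) + edgesCross E (S ∪ T) + 2 ≤ edgesCross E S + edgesCross E T := by
  obtain ⟨E, rfl⟩ := Multiset.exists_cons_of_mem he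
  have := edgesCross_inter_add_edgesCross_union_le E S T
  simp only [← Multiset.singleton_add, edgesCross_add, edgesCross_singleton, if_pos hI,
    if_pos hU, if_neg hS, if_neg hT]
  omega

theorem lam_le_edgesCross {E : Multiset (V × V)} {u v : V} {X : Finset V} (hu : u ∈ X)
    (hv : v ∉ X) : lam E u v ≤ edgesCross E X :=
  Nat.sInf_le ⟨X, hu, hv, rfl⟩

theorem exists_edgesCross_eq_lam (E : Multiset (V × V)) {u v : V} (huv : u ≠ v) :
    ∃ X : Finset V, u ∈ X ∧ v ∉ X ∧ edgesCross E X = lam E u v :=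
  Nat.sInf_mem (s := {n | ∃ X : Finset V, u ∈ X ∧ v ∉ X ∧ edgesCross E X = n})
    ⟨_, {u}, mem_singleton_self u, by simpa using huv.symm, rfl⟩

theorem edgeConn_of_le_lam [Fintype V] {E : Multiset (V × V)} {m : ℕ}
    (h : ∀ u v : V, u ≠ v → m ≤ lam E u v) : EdgeConn m E := by
  rintro S ⟨u, hu⟩ hS
  obtain ⟨v, -, hv⟩ := exists_of_ssubset (ssubset_univ_iff.2 hS)
  exact (h u v (ne_of_mem_of_not_mem hu hv)).trans (lam_le_edgesCross hu hv)

theorem edgesCross_inter_eq_two [Fintype V] {E : Multiset (V × V)} (hE : EdgeConn 2 E)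
    {Z T : Finset V} (hZ : edgesCross E Z = 2) (hT : edgesCross E T = 2)
    (hZT : (Z ∩ T).Nonempty) {p q : V} (hpq : (p, q) ∈ E ∨ (q, p) ∈ E)
    (hpZ : p ∈ Z) (hqZ : q ∉ Z) (hpT : p ∉ T) :
    edgesCross E (Z ∩ T) = 2 := by
  have hsub := edgesCross_inter_add_edgesCross_union_le E Z T
  have hI := hE _ hZT fun h => hqZ (mem_inter.1 (h ▸ mem_univ q)).1
  by_cases hU : Z ∪ T = univ
  · have hqT : q ∈ T := (mem_union.1 (hU.symm ▸ mem_univ q)).resolve_left hqZ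
    have hslack : edgesCross E (Z ∩ T) + edgesCross E (Z ∪ T) + 2 ≤
        edgesCross E Z + edgesCross E T := by
      rcases hpq with he | he <;>
        exact edgesCross_inter_add_edgesCross_union_add_two_le he (by simp [hpZ, hqZ])
          (by simp [hpT, hqT]) (by simp [hpT, hqZ]) (by simp [hpZ, hqT])
    omega
  · have := hE _ (hZT.mono inter_subset_union) hU
    omega

theorem exists_two_cut_of_edgesCross_eq_zero [Fintype V] {E : Multiset (V × V)}
    (hE : ∀ u v : V, u ≠ v → lam E u v = 2) {F : Multiset (V × V)} (hF : F ⊆ E)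
    {X : Finset V} (hX : edgesCross F X = 0) {u v : V} (hu : u ∈ X) (hv : v ∉ X) :
    ∃ Z : Finset V, u ∈ Z ∧ v ∉ Z ∧ edgesCross E Z = 2 ∧ edgesCross F Z = 0 := by
  induction F using Multiset.induction_on generalizing X u v with
  | empty =>
    obtain ⟨Z, huZ, hvZ, hZ⟩ := exists_edgesCross_eq_lam E (ne_of_mem_of_not_mem hu hv)
    exact ⟨Z, huZ, hvZ, hZ.trans (hE u v (ne_of_mem_of_not_mem hu hv)), by simp [edgesCross]⟩
  | cons f F ih =>
    obtain ⟨hfE, hFE⟩ := Multiset.cons_subset.1 hF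
    simp_rw [edgesCross_cons_eq_zero_iff] at hX ⊢
    obtain ⟨hfX, hFX⟩ := hX
    obtain ⟨Z, huZ, hvZ, hZ, hFZ⟩ := ih hFE hFX hu hv
    by_cases hfZ : f.1 ∈ Z ↔ f.2 ∈ Z
    · exact ⟨Z, huZ, hvZ, hZ, hfZ, hFZ⟩
    obtain ⟨p, q, hf, hpZ, hqZ⟩ : ∃ p q, (f = (p, q) ∨ f = (q, p)) ∧ p ∈ Z ∧ q ∉ Z := by
      by_cases h : f.1 ∈ Z
      · exact ⟨f.1, f.2, Or.inl rfl, h, by tauto⟩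
      · exact ⟨f.2, f.1, Or.inr rfl, by tauto, h⟩
    have hpq : (p, q) ∈ E ∨ (q, p) ∈ E := by rcases hf with rfl | rfl <;> simp [hfE]
    have hf_iff : ∀ Y : Finset V, p ∉ Y → q ∉ Y → (f.1 ∈ Y ↔ f.2 ∈ Y) := by
      rcases hf with rfl | rfl <;> intro Y hp hq <;> simp [hp, hq]
    have hpqX : p ∈ X ↔ q ∈ X := by rcases hf with rfl | rfl <;> simpa [Iff.comm] using hfX
    have hE2 : EdgeConn 2 E := edgeConn_of_le_lam fun u v huv => (hE u v huv).ge
    by_cases hpX : p ∈ X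
    · -- `f` lies inside `X`: uncross on the side of `v`
      obtain ⟨T, hvT, hqT, hT, hFT⟩ :=
        ih hFE (X := Xᶜ) (by rwa [edgesCross_compl]) (mem_compl.2 hv) (by simpa using hpqX.1 hpX)
      have hZc : v ∈ Zᶜ ∩ T := mem_inter.2 ⟨mem_compl.2 hvZ, hvT⟩
      refine ⟨(Zᶜ ∩ T)ᶜ, by simp [huZ], by simpa using hZc, ?_, ?_, ?_⟩
      · rw [edgesCross_compl]
        exact edgesCross_inter_eq_two hE2 (by rwa [edgesCross_compl]) hT ⟨v, hZc⟩ hpq.symm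
          (mem_compl.2 hqZ) (by simpa using hpZ) hqT
      · simpa only [mem_compl, not_iff_not] using hf_iff (Zᶜ ∩ T) (by simp [hpZ]) (by simp [hqT])
      · rw [edgesCross_compl]
        have := edgesCross_inter_add_edgesCross_union_le F Zᶜ T
        rw [edgesCross_compl] at this
        omega
    · obtain ⟨T, huT, hpT, hT, hFT⟩ := ih hFE hFX hu hpX
      have huZT : u ∈ Z ∩ T := mem_inter.2 ⟨huZ, huT⟩
      refine ⟨Z ∩ T, huZT, fun h => hvZ (mem_inter.1 h).1,
        edgesCross_inter_eq_two hE2 hZ hT ⟨u, huZT⟩ hpq hpZ hqZ hpT,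
        hf_iff _ (by simp [hpT]) (by simp [hqZ]), ?_⟩
      have := edgesCross_inter_add_edgesCross_union_le F Z T
      omega

end

theorem stmt_11_general {V : Type*} [Fintype V] (E F : Multiset (V × V))
    (hF : F ≤ E)
    (hcactus : ∀ u v : V, u ≠ v → lam E u v = 2) :
    EdgeConn 3 (E + F) ↔ MConnected F := by
  have hE2 : EdgeConn 2 E := edgeConn_of_le_lam fun u v huv => (hcactus u v huv).ge
  constructor
  · rintro h3 X ⟨u, hu⟩ hX
    obtain ⟨v, -, hv⟩ := exists_of_ssubset (ssubset_univ_iff.2 hX)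
    by_contra! hFX
    obtain ⟨Z, huZ, hvZ, hZ, hFZ⟩ := exists_two_cut_of_edgesCross_eq_zero hcactus
      (Multiset.subset_of_le hF) (Nat.lt_one_iff.1 hFX) hu hv
    have := h3 Z ⟨u, huZ⟩ fun h => hvZ (h ▸ mem_univ v)
    rw [edgesCross_add, hZ, hFZ] at this
    omega
  · intro hF1 S hS hSu
    rw [edgesCross_add]
    exact add_le_add (hE2 S hS hSu) (hF1 S hS hSu)

/-- For a cactus `G` and `F ⊆ E(G)`: doubling all edges of `F` yields a
3-edge-connected graph iff the spanning subgraph `(V(G), F)` is connected. -/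
theorem stmt_11 {V : Type*} [Fintype V] [Nonempty V] (E F : Multiset (V × V))
    (hF : F ≤ E)
    (hcactus : ∀ u v : V, u ≠ v → lam E u v = 2) :
    EdgeConn 3 (E + F) ↔ MConnected F :=
  stmt_11_general E F hF hcactus
end

section
/- Let D1, D2 be digraphs on the same vertex set with the same underlying undirected multigraph, such that D1 contains an (x0, y0, z0, v*, k)-out-rocket R (meaning R is a subgraph of D1 and the in- and out-degrees in D1 of all interior vertices of R equal those in R), D2 is 2-strong, and the tip arc of R is reversed in D2 (i.e., D2 contains the arc v*u where uv* is the tip arc of R). Then the number of arcs of D1 that are reversed in D2 is at least k + 1. -/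
/-!
For `i < k` let `Z` consist of `u` and the `x j, y j, z j` with `i < j ≤ k`. All of `Z` is
interior, so the degree condition forces the arcs of `D₁` crossing `Z` to be those of the
rocket: `z (i+1) z i` and the tip `u w` leave `Z`, while `x i x (i+1)` and `y i y (i+1)` enter it.
Since `D₂` is 2-strong, at least two arcs leave `Z` in `D₂` (otherwise deleting the head of the
only one disconnects `Z` from `x i` or `y i`). Reversing the tip leaves at most one of the
original leaving arcs, so some reversed arc enters `Z` in `D₁`, i.e. `F` contains
`x i x (i+1)` or `y i y (i+1)`. These `k` arcs have distinct tails, all different from `u`, so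
together with the tip they give `k + 1` distinct arcs of `F`.
-/

open scoped Classical

/-- Number of arcs leaving a vertex set `X`. -/
noncomputable def arcsOut {V : Type*} (A : Multiset (V × V)) (X : Finset V) : ℕ :=
  (A.filter fun a => a.1 ∈ X ∧ a.2 ∉ X).card

/-- Out-degree of a vertex in a multiset of arcs. -/
noncomputable def outDeg {V : Type*} (A : Multiset (V × V)) (v : V) : ℕ :=
  (A.filter fun a => a.1 = v).card

/-- In-degree of a vertex in a multiset of arcs. -/
noncomputable def inDeg {V : Type*} (A : Multiset (V × V)) (v : V) : ℕ :=
  (A.filter fun a => a.2 = v).card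

/-- A digraph is `k`-strong: more than `k` vertices, and deleting any set of fewer
than `k` vertices leaves a strongly connected digraph. -/
def KStrongD {V : Type*} [Fintype V] (k : ℕ) (A : Multiset (V × V)) : Prop :=
  k < Fintype.card V ∧ ∀ S : Finset V, S.card < k →
    ∀ X : Finset V, X.Nonempty → X ⊆ Sᶜ → X ≠ Sᶜ →
      1 ≤ arcsOut (A.filter fun a => a.1 ∉ S ∧ a.2 ∉ S) X

/-- The arcs of the `(x 0, y 0, z 0, w, k)`-out-rocket with vertices
`x i, y i, z i` (`0 ≤ i ≤ k`), `u` and tip vertex `w`. -/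
noncomputable def rocketArcs {V : Type*} (k : ℕ) (x y z : ℕ → V) (u w : V) :
    Multiset (V × V) :=
  ((Finset.Icc 1 k).val.bind fun i => {(x i, y i), (y i, z i), (z i, x i)})
    + ((Finset.range k).val.bind fun i =>
        {(x i, x (i + 1)), (y i, y (i + 1)), (z (i + 1), z i)})
    + {(x k, u), (y k, u), (u, z k), (u, w)}

/-- The interior vertices of the rocket: `x i, y i, z i` for `1 ≤ i ≤ k` and `u`. -/
def rocketInterior {V : Type*} (k : ℕ) (x y z : ℕ → V) (u : V) : List V :=
  u :: (List.range k).flatMap fun i => [x (i + 1), y (i + 1), z (i + 1)]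

theorem Multiset.filter_mem_eq_of_le_of_card_fiber_eq {α β : Type*} {R D : Multiset α}
    (hRD : R ≤ D) (f : α → β) {X : Finset β}
    (h : ∀ v ∈ X, (D.filter fun a => f a = v).card = (R.filter fun a => f a = v).card) :
    D.filter (fun a => f a ∈ X) = R.filter (fun a => f a ∈ X) := by
  obtain ⟨E, rfl⟩ := Multiset.le_iff_exists_add.1 hRD
  suffices E.filter (fun a => f a ∈ X) = 0 by rw [Multiset.filter_add, this, add_zero]
  refine Multiset.filter_eq_nil.2 fun a ha haX => ?_
  have hfiber := h (f a) haX
  rw [Multiset.filter_add, Multiset.card_add, add_eq_left, Multiset.card_eq_zero,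
    Multiset.filter_eq_nil] at hfiber
  exact hfiber a ha rfl

section Cuts

variable {V : Type*}

theorem arcsOut_add (A B : Multiset (V × V)) (X : Finset V) :
    arcsOut (A + B) X = arcsOut A X + arcsOut B X := by
  simp only [arcsOut, Multiset.filter_add, Multiset.card_add]

theorem arcsOut_map_swap [Fintype V] (A : Multiset (V × V)) (X : Finset V) :
    arcsOut (A.map Prod.swap) X = arcsOut A Xᶜ := by
  simp only [arcsOut, Multiset.filter_map, Multiset.card_map, Finset.mem_compl, not_not]
  congr 2
  ext a
  simp [and_comm]

theorem KStrongD.two_le_arcsOut [Fintype V] {D : Multiset (V × V)} (hD : KStrongD 2 D)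
    {X : Finset V} (hX : X.Nonempty) {a b : V} (ha : a ∉ X) (hb : b ∉ X) (hab : a ≠ b) :
    2 ≤ arcsOut D X := by
  by_contra! hlt
  set heads := ((D.filter fun e => e.1 ∈ X ∧ e.2 ∉ X).map Prod.snd).toFinset
  have hcard : heads.card < 2 :=
    (Multiset.toFinset_card_le _).trans_lt (by rwa [Multiset.card_map])
  have hXS : X ⊆ headsᶜ := by
    intro v hv
    rw [Finset.mem_compl]
    intro hvS
    obtain ⟨e, he, rfl⟩ := Multiset.mem_map.1 (Multiset.mem_toFinset.1 hvS)
    exact (Multiset.mem_filter.1 he).2.2 hv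
  have hne : X ≠ headsᶜ := by
    intro h
    have hmem : ∀ v ∉ X, v ∈ heads := fun v hv => by
      rw [h, Finset.mem_compl, not_not] at hv
      exact hv
    exact hab (Finset.card_le_one.1 (by omega) _ (hmem a ha) _ (hmem b hb))
  obtain ⟨e, he⟩ := Multiset.card_pos_iff_exists_mem.1 (hD.2 heads hcard X hX hXS hne)
  simp only [Multiset.mem_filter] at he
  obtain ⟨⟨heD, -, heS⟩, heX⟩ := he
  exact heS (Multiset.mem_toFinset.2 (Multiset.mem_map.2
    ⟨e, Multiset.mem_filter.2 ⟨heD, heX⟩, rfl⟩))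

theorem exists_mem_entering_of_reverse [Fintype V] {D₁ F : Multiset (V × V)} {X : Finset V}
    (hF : F ≤ D₁) (hD₁ : arcsOut D₁ X ≤ 2) (hleave : ∃ a ∈ F, a.1 ∈ X ∧ a.2 ∉ X)
    (hD₂ : 2 ≤ arcsOut (D₁ - F + F.map Prod.swap) X) :
    ∃ a ∈ F, a.1 ∉ X ∧ a.2 ∈ X := by
  have hsplit : arcsOut D₁ X = arcsOut (D₁ - F) X + arcsOut F X := by
    rw [← arcsOut_add, tsub_add_cancel_of_le hF]
  have hFout : 0 < arcsOut F X := by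
    obtain ⟨a, haF, ha⟩ := hleave
    exact Multiset.card_pos_iff_exists_mem.2 ⟨a, Multiset.mem_filter.2 ⟨haF, ha⟩⟩
  rw [arcsOut_add, arcsOut_map_swap] at hD₂
  obtain ⟨a, ha⟩ := Multiset.card_pos_iff_exists_mem.1 (show 0 < arcsOut F Xᶜ by omega)
  simp only [Multiset.mem_filter, Finset.mem_compl, not_not] at ha
  exact ⟨a, ha.1, ha.2⟩

theorem succ_le_card_of_injOn_fst {F : Multiset (V × V)} {n : ℕ} {t : ℕ → V}
    (ht : Set.InjOn t (Set.Iio n)) (hF : ∀ i < n, ∃ a ∈ F, a.1 = t i)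
    {a₀ : V × V} (ha₀ : a₀ ∈ F) (hne : ∀ i < n, t i ≠ a₀.1) :
    n + 1 ≤ Multiset.card F := by
  have hnot : a₀.1 ∉ (Finset.range n).image t := by
    simp only [Finset.mem_image, Finset.mem_range, not_exists, not_and]
    exact hne
  have hsub : insert a₀.1 ((Finset.range n).image t) ⊆ (F.map Prod.fst).toFinset := by
    intro v hv
    simp only [Finset.mem_insert, Finset.mem_image, Finset.mem_range] at hv
    rcases hv with rfl | ⟨i, hi, rfl⟩
    · exact Multiset.mem_toFinset.2 (Multiset.mem_map_of_mem _ ha₀)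
    · obtain ⟨a, haF, hat⟩ := hF i hi
      rw [← hat]
      exact Multiset.mem_toFinset.2 (Multiset.mem_map_of_mem _ haF)
  calc n + 1 = (insert a₀.1 ((Finset.range n).image t)).card := by
        rw [Finset.card_insert_of_notMem hnot, Finset.card_image_of_injOn (by simpa using ht),
          Finset.card_range]
    _ ≤ (F.map Prod.fst).toFinset.card := Finset.card_le_card hsub
    _ ≤ Multiset.card F := (Multiset.toFinset_card_le _).trans (Multiset.card_map _ _).le

end Cuts

section Transfer

variable {V : Type*} {R D : Multiset (V × V)} {X : Finset V}

theorem arcsOut_eq_of_outDeg_eq (hRD : R ≤ D) (h : ∀ v ∈ X, outDeg D v = outDeg R v) :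
    arcsOut D X = arcsOut R X := by
  have hfilter : ∀ A : Multiset (V × V), A.filter (fun a => a.1 ∈ X ∧ a.2 ∉ X) =
      (A.filter fun a => a.1 ∈ X).filter fun a => a.2 ∉ X := fun A => by
    rw [Multiset.filter_filter]
    exact Multiset.filter_congr fun _ _ => and_comm
  rw [arcsOut, arcsOut, hfilter, hfilter, Multiset.filter_mem_eq_of_le_of_card_fiber_eq hRD _ h]

theorem mem_of_inDeg_eq (hRD : R ≤ D) (h : ∀ v ∈ X, inDeg D v = inDeg R v) {a : V × V}
    (ha : a ∈ D) (hin : a.2 ∈ X) : a ∈ R := by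
  have ha' : a ∈ D.filter fun a => a.2 ∈ X := Multiset.mem_filter.2 ⟨ha, hin⟩
  rw [Multiset.filter_mem_eq_of_le_of_card_fiber_eq hRD _ h] at ha'
  exact Multiset.mem_of_mem_filter ha'

end Transfer

section Rocket

variable {V : Type*} {k i : ℕ} {x y z : ℕ → V} {u w : V} {Z : Finset V}

theorem rocketArcs_filter_leaving (hik : i < k) (hx : ∀ j ≤ k, x j ∈ Z ↔ i < j)
    (hy : ∀ j ≤ k, y j ∈ Z ↔ i < j) (hz : ∀ j ≤ k, z j ∈ Z ↔ i < j) (hu : u ∈ Z)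
    (hw : w ∉ Z) :
    (rocketArcs k x y z u w).filter (fun a => a.1 ∈ Z ∧ a.2 ∉ Z) =
      {(z (i + 1), z i), (u, w)} := by
  have htriangle : ∀ j ∈ Finset.Icc 1 k,
      ({(x j, y j), (y j, z j), (z j, x j)} : Multiset (V × V)).filter
        (fun a => a.1 ∈ Z ∧ a.2 ∉ Z) = 0 := by
    intro j hj
    rw [Finset.mem_Icc] at hj
    simp [hx j hj.2, hy j hj.2, hz j hj.2]
  have hrung : ∀ j ∈ Finset.range k,
      ({(x j, x (j + 1)), (y j, y (j + 1)), (z (j + 1), z j)} : Multiset (V × V)).filter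
        (fun a => a.1 ∈ Z ∧ a.2 ∉ Z) = if j = i then {(z (i + 1), z i)} else 0 := by
    intro j hj
    rw [Finset.mem_range] at hj
    simp only [Multiset.insert_eq_cons, Multiset.filter_cons, Multiset.filter_singleton,
      hx j hj.le, hy j hj.le, hz j hj.le, hx (j + 1) hj, hy (j + 1) hj, hz (j + 1) hj]
    split_ifs <;> first | omega | subst_vars; simp
  have hbind : ∀ (s : Finset ℕ) (f : ℕ → Multiset (V × V)),
      s.val.bind f = ∑ j ∈ s, f j := fun s f => (Finset.sum_eq_multiset_sum s f).symm
  have htip : ({(x k, u), (y k, u), (u, z k), (u, w)} : Multiset (V × V)).filter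
      (fun a => a.1 ∈ Z ∧ a.2 ∉ Z) = {(u, w)} := by
    simp [hx k le_rfl, hy k le_rfl, hz k le_rfl, hu, hw, hik]
  rw [rocketArcs, Multiset.filter_add, Multiset.filter_add, Multiset.filter_bind,
    Multiset.filter_bind, hbind, hbind, Finset.sum_eq_zero htriangle,
    Finset.sum_congr rfl hrung, Finset.sum_ite_eq', if_pos (Finset.mem_range.2 hik), htip]
  rfl

theorem eq_rung_of_mem_rocketArcs_of_entering (hik : i < k) (hx : ∀ j ≤ k, x j ∈ Z ↔ i < j)
    (hy : ∀ j ≤ k, y j ∈ Z ↔ i < j) (hz : ∀ j ≤ k, z j ∈ Z ↔ i < j) (hu : u ∈ Z)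
    (hw : w ∉ Z) {a : V × V} (ha : a ∈ rocketArcs k x y z u w) (hout : a.1 ∉ Z)
    (hin : a.2 ∈ Z) :
    a = (x i, x (i + 1)) ∨ a = (y i, y (i + 1)) := by
  simp only [rocketArcs, Multiset.mem_add, Multiset.mem_bind, Finset.mem_val, Finset.mem_Icc,
    Finset.mem_range, Multiset.insert_eq_cons, Multiset.mem_cons,
    Multiset.mem_singleton] at ha
  rcases ha with (⟨j, hj, rfl | rfl | rfl⟩ | ⟨j, hj, rfl | rfl | rfl⟩) | rfl | rfl | rfl | rfl
  · simp only [hx j hj.2, hy j hj.2] at hout hin; omega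
  · simp only [hy j hj.2, hz j hj.2] at hout hin; omega
  · simp only [hz j hj.2, hx j hj.2] at hout hin; omega
  · simp only [hx j hj.le, hx (j + 1) hj] at hout hin
    obtain rfl : j = i := by omega
    simp
  · simp only [hy j hj.le, hy (j + 1) hj] at hout hin
    obtain rfl : j = i := by omega
    simp
  · simp only [hz j hj.le, hz (j + 1) hj] at hout hin; omega
  · exact absurd ((hx k le_rfl).2 hik) hout
  · exact absurd ((hy k le_rfl).2 hik) hout
  · exact absurd hu hout
  · exact absurd hin hw

end Rocket

section Labels

variable {V : Type*} {k : ℕ} {x y z : ℕ → V} {u w : V}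

/-- `(j, 0)`, `(j, 1)`, `(j, 2)` label `x j`, `y j`, `z j`. -/
def rocketVertex (x y z : ℕ → V) (p : ℕ × Fin 3) : V :=
  ![x p.1, y p.1, z p.1] p.2

theorem flatMap_eq_map_rocketVertex (k : ℕ) (x y z : ℕ → V) :
    ((List.range (k + 1)).flatMap fun i => [x i, y i, z i]) =
      (List.range (k + 1) ×ˢ List.finRange 3).map (rocketVertex x y z) := by
  simp [SProd.sprod, List.product, List.map_flatMap, List.finRange_succ, rocketVertex]

theorem rocketVertex_distinct
    (h : (((List.range (k + 1)).flatMap fun i => [x i, y i, z i]) ++ [u, w]).Nodup) :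
    Set.InjOn (rocketVertex x y z) {p | p.1 ≤ k} ∧
      (∀ p : ℕ × Fin 3, p.1 ≤ k → rocketVertex x y z p ≠ u ∧ rocketVertex x y z p ≠ w) ∧
      u ≠ w := by
  rw [flatMap_eq_map_rocketVertex, List.nodup_append] at h
  obtain ⟨hmap, huw, hdisj⟩ := h
  have hmem : ∀ p : ℕ × Fin 3, p ∈ List.range (k + 1) ×ˢ List.finRange 3 ↔ p.1 ≤ k := by
    simp [List.mem_product]
  refine ⟨fun p hp q hq hpq =>
    List.inj_on_of_nodup_map hmap ((hmem p).2 hp) ((hmem q).2 hq) hpq, fun p hp => ?_,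
    by simpa using huw⟩
  have := hdisj _ (List.mem_map_of_mem ((hmem p).2 hp))
  simp only [List.mem_cons, List.not_mem_nil, or_false] at this
  exact ⟨this u (.inl rfl), this w (.inr rfl)⟩

/-- The set `Z` of the key step for the index `i`. -/
noncomputable def rocketCut (k i : ℕ) (x y z : ℕ → V) (u : V) : Finset V :=
  insert u ((Finset.Ioc i k ×ˢ Finset.univ).image (rocketVertex x y z))

theorem rocketVertex_mem_rocketCut_iff {i : ℕ}
    (hinj : Set.InjOn (rocketVertex x y z) {p | p.1 ≤ k})
    (hu : ∀ p : ℕ × Fin 3, p.1 ≤ k → rocketVertex x y z p ≠ u) {p : ℕ × Fin 3}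
    (hp : p.1 ≤ k) :
    rocketVertex x y z p ∈ rocketCut k i x y z u ↔ i < p.1 := by
  simp only [rocketCut, Finset.mem_insert, Finset.mem_image, Finset.mem_product,
    Finset.mem_Ioc, Finset.mem_univ, and_true, hu p hp, false_or]
  constructor
  · rintro ⟨q, hq, hqp⟩
    rw [← hinj hq.2 hp hqp]
    exact hq.1
  · exact fun hi => ⟨p, ⟨hi, hp⟩, rfl⟩

theorem notMem_rocketCut {i : ℕ} (hw : ∀ p : ℕ × Fin 3, p.1 ≤ k → rocketVertex x y z p ≠ w)
    (huw : u ≠ w) : w ∉ rocketCut k i x y z u := by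
  simp only [rocketCut, Finset.mem_insert, Finset.mem_image, Finset.mem_product,
    Finset.mem_Ioc, Finset.mem_univ, and_true, not_or, not_exists, not_and]
  exact ⟨huw.symm, fun p hp => hw p hp.2⟩

theorem mem_rocketInterior_of_mem_rocketCut {i : ℕ} {v : V}
    (hv : v ∈ rocketCut k i x y z u) :
    v ∈ rocketInterior k x y z u := by
  simp only [rocketCut, Finset.mem_insert, Finset.mem_image, Finset.mem_product,
    Finset.mem_Ioc, Finset.mem_univ, and_true] at hv
  rcases hv with rfl | ⟨⟨j, c⟩, ⟨hij, hjk⟩, rfl⟩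
  · exact List.mem_cons_self
  · obtain ⟨j, rfl⟩ : ∃ j', j = j' + 1 := ⟨j - 1, by omega⟩
    refine List.mem_cons_of_mem _ (List.mem_flatMap.2 ⟨j, List.mem_range.2 (by omega), ?_⟩)
    fin_cases c <;> simp [rocketVertex]

end Labels

theorem rung_mem_of_reverse {V : Type*} [Fintype V] {k i : ℕ} {x y z : ℕ → V} {u w : V}
    {Z : Finset V} {D₁ F : Multiset (V × V)} (hik : i < k) (hx : ∀ j ≤ k, x j ∈ Z ↔ i < j)
    (hy : ∀ j ≤ k, y j ∈ Z ↔ i < j) (hz : ∀ j ≤ k, z j ∈ Z ↔ i < j) (hu : u ∈ Z)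
    (hw : w ∉ Z) (hxy : x i ≠ y i) (hsub : rocketArcs k x y z u w ≤ D₁)
    (hdeg : ∀ v ∈ Z, outDeg D₁ v = outDeg (rocketArcs k x y z u w) v ∧
      inDeg D₁ v = inDeg (rocketArcs k x y z u w) v)
    (hF : F ≤ D₁) (h2strong : KStrongD 2 (D₁ - F + F.map Prod.swap)) (htip : (u, w) ∈ F) :
    (x i, x (i + 1)) ∈ F ∨ (y i, y (i + 1)) ∈ F := by
  have hleaving : arcsOut D₁ Z = 2 := by
    rw [arcsOut_eq_of_outDeg_eq hsub fun v hv => (hdeg v hv).1, arcsOut,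
      rocketArcs_filter_leaving hik hx hy hz hu hw]
    rfl
  have hxi : x i ∉ Z := (hx i hik.le).not.2 (lt_irrefl i)
  have hyi : y i ∉ Z := (hy i hik.le).not.2 (lt_irrefl i)
  obtain ⟨a, haF, hout, hin⟩ := exists_mem_entering_of_reverse hF hleaving.le
    ⟨(u, w), htip, hu, hw⟩ (h2strong.two_le_arcsOut ⟨u, hu⟩ hxi hyi hxy)
  have haR := mem_of_inDeg_eq hsub (fun v hv => (hdeg v hv).2) (Multiset.mem_of_le hF haF) hin
  rcases eq_rung_of_mem_rocketArcs_of_entering hik hx hy hz hu hw haR hout hin with rfl | rfl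
  exacts [.inl haF, .inr haF]

/-- If `D₁` contains an out-rocket `R` (all in/out-degrees of interior vertices of `R`
in `D₁` equal those in `R`), and a 2-strong digraph `D₂` is obtained from `D₁` by
reversing the arcs of a set `F` containing the tip arc of `R`, then at least `k + 1`
arcs are reversed, i.e. `|F| ≥ k + 1`. -/
theorem stmt_19 {V : Type*} [Fintype V] (k : ℕ) (x y z : ℕ → V) (u w : V)
    (hdistinct :
      (((List.range (k + 1)).flatMap fun i => [x i, y i, z i]) ++ [u, w]).Nodup)
    (D₁ D₂ F : Multiset (V × V))
    (hsub : rocketArcs k x y z u w ≤ D₁)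
    (hdeg : ∀ v ∈ rocketInterior k x y z u,
      outDeg D₁ v = outDeg (rocketArcs k x y z u w) v ∧
      inDeg D₁ v = inDeg (rocketArcs k x y z u w) v)
    (hF : F ≤ D₁) (hD₂ : D₂ = (D₁ - F) + F.map Prod.swap)
    (h2strong : KStrongD 2 D₂)
    (htip : (u, w) ∈ F) :
    k + 1 ≤ Multiset.card F := by
  obtain ⟨hinj, hne, huw⟩ := rocketVertex_distinct hdistinct
  have hrung : ∀ i < k, ∃ c : Fin 3, ∃ a ∈ F, a.1 = rocketVertex x y z (i, c) := by
    intro i hik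
    have hmem (c : Fin 3) (j : ℕ) (hj : j ≤ k) :=
      rocketVertex_mem_rocketCut_iff (i := i) hinj (fun p hp => (hne p hp).1) (p := (j, c)) hj
    have hxy : x i ≠ y i := fun h => by
      simpa using hinj (x₁ := (i, 0)) (x₂ := (i, 1)) hik.le hik.le h
    rcases rung_mem_of_reverse hik (hmem 0) (hmem 1) (hmem 2) (Finset.mem_insert_self _ _)
      (notMem_rocketCut (fun p hp => (hne p hp).2) huw) hxy hsub
      (fun v hv => hdeg v (mem_rocketInterior_of_mem_rocketCut hv)) hF (hD₂ ▸ h2strong) htip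
      with h | h
    exacts [⟨0, _, h, rfl⟩, ⟨1, _, h, rfl⟩]
  choose! c hc using hrung
  exact succ_le_card_of_injOn_fst (t := fun i => rocketVertex x y z (i, c i))
    (fun i hi j hj h => congrArg Prod.fst (hinj (x₁ := (i, c i)) (x₂ := (j, c j))
      (Set.mem_Iio.1 hi).le (Set.mem_Iio.1 hj).le h)) hc htip
    fun i hi => (hne _ hi.le).1
end
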